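/- Fix X = 3/2, k_1 = 8, k_2 = 1, ξ = 1, k_7 = 8, β = 11/936, k_4 = 16384/819, and regard δ and k_3 as variables, so that F_1, F_2 and the trace and determinant of the Jacobian J of (F_1, F_2) in (x_1, x_2) become smooth functions of (x_1, x_2, δ, k_3). Then the map T(x_1, x_2, δ, k_3) = (F_1, F_2, tr J, det J) has invertible (Fréchet) derivative at the point (1, 1/4, 1/6, 324/7); its Jacobian determinant there equals −6 k_3^2 − (27/4) W k_3 with k_3 = 324/7 and W = 256 β k_4/(8β+1)^3, which is negative. -/

import Mathlib

/-- Right-hand side `F₁` of the reduced two-dimensional model for wild-type Lck. -/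
noncomputable def F1 (k1 k2 k3 k4 k7 β δ ξ X : ℝ) (x1 x2 : ℝ) : ℝ :=
  -(k2 * x1) + k1 * x2 + k4 * ξ * (X - x1 - x2) / (β * (ξ + 1) + ξ * (X - x1 - x2))
    - k3 * x1 * ((X - x1 - x2) + δ * x1)

/-- Right-hand side `F₂` of the reduced two-dimensional model for wild-type Lck. -/
noncomputable def F2 (k1 k2 k3 k4 k7 β δ ξ X : ℝ) (x1 x2 : ℝ) : ℝ :=
  k2 * x1 - k1 * x2 + (k7 / (ξ + 1)) * (X - x1 - x2)

/-- Jacobian matrix of `(F₁, F₂)` with respect to `(x₁, x₂)`, formed from the four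
partial derivatives. -/
noncomputable def Jac (k1 k2 k3 k4 k7 β δ ξ X : ℝ) (x1 x2 : ℝ) : Matrix (Fin 2) (Fin 2) ℝ :=
  !![deriv (fun s => F1 k1 k2 k3 k4 k7 β δ ξ X s x2) x1,
     deriv (fun s => F1 k1 k2 k3 k4 k7 β δ ξ X x1 s) x2;
     deriv (fun s => F2 k1 k2 k3 k4 k7 β δ ξ X s x2) x1,
     deriv (fun s => F2 k1 k2 k3 k4 k7 β δ ξ X x1 s) x2]

/-- The map `T(x₁, x₂, δ, k₃) = (F₁, F₂, tr J, det J)`, with the remaining parameters fixed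
at `X = 3/2`, `k₁ = 8`, `k₂ = 1`, `ξ = 1`, `k₇ = 8`, `β = 11/936`, `k₄ = 16384/819`. -/
noncomputable def Tmap (p : ℝ × ℝ × ℝ × ℝ) : ℝ × ℝ × ℝ × ℝ :=
  (F1 8 1 p.2.2.2 (16384/819) 8 (11/936) p.2.2.1 1 (3/2) p.1 p.2.1,
   F2 8 1 p.2.2.2 (16384/819) 8 (11/936) p.2.2.1 1 (3/2) p.1 p.2.1,
   Matrix.trace (Jac 8 1 p.2.2.2 (16384/819) 8 (11/936) p.2.2.1 1 (3/2) p.1 p.2.1),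
   (Jac 8 1 p.2.2.2 (16384/819) 8 (11/936) p.2.2.1 1 (3/2) p.1 p.2.1).det)

open Filter Topology

/-! Where the denominator `β(ξ+1) + ξ(X − x₁ − x₂)` of `F₁` does not vanish, the partial
derivatives of `F₁, F₂` are explicit rational functions, so near the Bogdanov–Takens point
`T` agrees with the rational map obtained by substituting them into `J`; away from that set
`Jac` is a junk value of `deriv`, which is why only eventual equality holds. The chain rule
gives the 4 × 4 Jacobian of this rational map at the point, and its determinant is
`−5334093/196 = −6 k₃² − (27/4) W k₃`. -/

section Partials

variable (k1 k2 k3 k4 k7 β δ ξ X x1 x2 : ℝ)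

noncomputable def dF1dx1 : ℝ :=
  -k2 - k4 * ξ * (β * (ξ + 1)) / (β * (ξ + 1) + ξ * (X - x1 - x2)) ^ 2
    - k3 * ((X - x1 - x2) + δ * x1) - k3 * x1 * (δ - 1)

noncomputable def dF1dx2 : ℝ :=
  k1 - k4 * ξ * (β * (ξ + 1)) / (β * (ξ + 1) + ξ * (X - x1 - x2)) ^ 2 + k3 * x1

theorem hasDerivAt_F1_x1 (hD : β * (ξ + 1) + ξ * (X - x1 - x2) ≠ 0) :
    HasDerivAt (fun s => F1 k1 k2 k3 k4 k7 β δ ξ X s x2) (dF1dx1 k2 k3 k4 β δ ξ X x1 x2) x1 := by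
  have hu : HasDerivAt (fun s => X - s - x2) (-1) x1 := ((hasDerivAt_id x1).const_sub X).sub_const x2
  have hsat := (hu.const_mul (k4 * ξ)).div ((hu.const_mul ξ).const_add (β * (ξ + 1))) hD
  have H := ((((hasDerivAt_id x1).const_mul k2).neg.add_const (k1 * x2)).add hsat).sub
    (((hasDerivAt_id x1).const_mul k3).mul (hu.add ((hasDerivAt_id x1).const_mul δ)))
  refine H.congr_deriv ?_
  simp only [dF1dx1, id, Pi.add_apply]; field_simp; ring

theorem hasDerivAt_F1_x2 (hD : β * (ξ + 1) + ξ * (X - x1 - x2) ≠ 0) :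
    HasDerivAt (fun s => F1 k1 k2 k3 k4 k7 β δ ξ X x1 s) (dF1dx2 k1 k3 k4 β ξ X x1 x2) x2 := by
  have hu : HasDerivAt (fun s => X - x1 - s) (-1) x2 := (hasDerivAt_id x2).const_sub (X - x1)
  have hsat := (hu.const_mul (k4 * ξ)).div ((hu.const_mul ξ).const_add (β * (ξ + 1))) hD
  have H := ((((hasDerivAt_id x2).const_mul k1).const_add (-(k2 * x1))).add hsat).sub
    ((hu.add_const (δ * x1)).const_mul (k3 * x1))
  refine H.congr_deriv ?_
  simp only [dF1dx2]; field_simp; ring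

theorem hasDerivAt_F2_x1 :
    HasDerivAt (fun s => F2 k1 k2 k3 k4 k7 β δ ξ X s x2) (k2 - k7 / (ξ + 1)) x1 := by
  have H := (((hasDerivAt_id x1).const_mul k2).sub_const (k1 * x2)).add
    ((((hasDerivAt_id x1).const_sub X).sub_const x2).const_mul (k7 / (ξ + 1)))
  exact H.congr_deriv (by ring)

theorem hasDerivAt_F2_x2 :
    HasDerivAt (fun s => F2 k1 k2 k3 k4 k7 β δ ξ X x1 s) (-k1 - k7 / (ξ + 1)) x2 := by
  have H := (((hasDerivAt_id x2).const_mul k1).const_sub (k2 * x1)).add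
    (((hasDerivAt_id x2).const_sub (X - x1)).const_mul (k7 / (ξ + 1)))
  exact H.congr_deriv (by ring)

noncomputable def JacExplicit : Matrix (Fin 2) (Fin 2) ℝ :=
  !![dF1dx1 k2 k3 k4 β δ ξ X x1 x2, dF1dx2 k1 k3 k4 β ξ X x1 x2;
     k2 - k7 / (ξ + 1), -k1 - k7 / (ξ + 1)]

theorem Jac_eq_JacExplicit (hD : β * (ξ + 1) + ξ * (X - x1 - x2) ≠ 0) :
    Jac k1 k2 k3 k4 k7 β δ ξ X x1 x2 = JacExplicit k1 k2 k3 k4 k7 β δ ξ X x1 x2 := by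
  rw [Jac, JacExplicit, (hasDerivAt_F1_x1 k1 k2 k3 k4 k7 β δ ξ X x1 x2 hD).deriv,
    (hasDerivAt_F1_x2 k1 k2 k3 k4 k7 β δ ξ X x1 x2 hD).deriv,
    (hasDerivAt_F2_x1 k1 k2 k3 k4 k7 β δ ξ X x1 x2).deriv,
    (hasDerivAt_F2_x2 k1 k2 k3 k4 k7 β δ ξ X x1 x2).deriv]

end Partials

noncomputable def coords : (ℝ × ℝ × ℝ × ℝ) ≃ₗ[ℝ] (Fin 4 → ℝ) where
  toFun p := ![p.1, p.2.1, p.2.2.1, p.2.2.2]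
  invFun v := (v 0, v 1, v 2, v 3)
  map_add' _ _ := by ext i; fin_cases i <;> rfl
  map_smul' _ _ := by ext i; fin_cases i <;> rfl
  left_inv _ := rfl
  right_inv v := by ext i; fin_cases i <;> rfl

theorem coords_apply (p : ℝ × ℝ × ℝ × ℝ) : coords p = ![p.1, p.2.1, p.2.2.1, p.2.2.2] := rfl

theorem coords_symm_apply (v : Fin 4 → ℝ) : coords.symm v = (v 0, v 1, v 2, v 3) := rfl

-- Rows: `F₁, F₂, tr J, det J`; columns: `x₁, x₂, δ, k₃`.
noncomputable def jacobianTmap : Matrix (Fin 4) (Fin 4) ℝ :=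
  !![12, 48, -324/7, -5/12;
     -3, -12, 0, 0;
     873/28, 9/28, -648/7, 5/12;
     -10449/28, -3969/28, 7776/7, -2]

noncomputable def fderivTmap : (ℝ × ℝ × ℝ × ℝ) →L[ℝ] (ℝ × ℝ × ℝ × ℝ) :=
  LinearMap.toContinuousLinearMap
    (coords.symm.toLinearMap ∘ₗ jacobianTmap.toLin' ∘ₗ coords.toLinearMap)

theorem fderivTmap_apply (v : ℝ × ℝ × ℝ × ℝ) :
    fderivTmap v = coords.symm (jacobianTmap.mulVec (coords v)) := rfl

theorem det_fderivTmap :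
    LinearMap.det (fderivTmap : (ℝ × ℝ × ℝ × ℝ) →ₗ[ℝ] (ℝ × ℝ × ℝ × ℝ)) = -5334093 / 196 := by
  have h := LinearMap.det_conj (Matrix.toLin' jacobianTmap) coords.symm
  rw [LinearEquiv.symm_symm] at h
  rw [fderivTmap, LinearMap.coe_toContinuousLinearMap, h, LinearMap.det_toLin']
  simp [jacobianTmap, Matrix.det_succ_row_zero, Fin.sum_univ_succ, Fin.succAbove]
  norm_num

noncomputable def TmapExplicit (p : ℝ × ℝ × ℝ × ℝ) : ℝ × ℝ × ℝ × ℝ :=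
  (F1 8 1 p.2.2.2 (16384/819) 8 (11/936) p.2.2.1 1 (3/2) p.1 p.2.1,
   F2 8 1 p.2.2.2 (16384/819) 8 (11/936) p.2.2.1 1 (3/2) p.1 p.2.1,
   Matrix.trace (JacExplicit 8 1 p.2.2.2 (16384/819) 8 (11/936) p.2.2.1 1 (3/2) p.1 p.2.1),
   (JacExplicit 8 1 p.2.2.2 (16384/819) 8 (11/936) p.2.2.1 1 (3/2) p.1 p.2.1).det)

theorem hasFDerivAt_TmapExplicit :
    HasFDerivAt TmapExplicit fderivTmap (1, 1/4, 1/6, 324/7) := by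
  set p₀ : ℝ × ℝ × ℝ × ℝ := (1, 1/4, 1/6, 324/7)
  have hx1 : HasFDerivAt (fun p : ℝ × ℝ × ℝ × ℝ => p.1) _ p₀ := hasFDerivAt_fst (𝕜 := ℝ)
  have hx2 : HasFDerivAt (fun p : ℝ × ℝ × ℝ × ℝ => p.2.1) _ p₀ := (hasFDerivAt_snd (𝕜 := ℝ)).fst
  have hδk3 : HasFDerivAt (fun p : ℝ × ℝ × ℝ × ℝ => p.2.2) _ p₀ := (hasFDerivAt_snd (𝕜 := ℝ)).snd
  have hδ := hδk3.fst
  have hk3 := hδk3.snd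
  have hu := (hx1.const_sub (3 / 2)).sub hx2
  have hD0 : 11 / 468 + (3 / 2 - p₀.1 - p₀.2.1) ≠ 0 := by norm_num [p₀]
  have hw := (hasFDerivAt_inv hD0).comp p₀ (hu.const_add (11 / 468))
  have hK := (hw.pow 2).const_mul (11 / 468 * (16384 / 819))
  have hv := hu.add (hδ.mul hx1)
  have ha := ((hK.const_sub (-1)).sub (hk3.mul hv)).sub ((hk3.mul hx1).mul (hδ.sub_const 1))
  have hb := (hK.const_sub 8).add (hk3.mul hx1)
  have hF1 := ((hx1.neg.add (hx2.const_mul 8)).add ((hu.const_mul (16384 / 819)).mul hw)).sub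
    ((hk3.mul hx1).mul hv)
  have hF2 := (hx1.sub (hx2.const_mul 8)).add (hu.const_mul 4)
  have H := hF1.prodMk (hF2.prodMk
    ((ha.sub_const 12).prodMk ((ha.const_mul (-12)).add (hb.const_mul 3))))
  refine (H.congr_fderiv (ContinuousLinearMap.ext fun v => ?_)).congr_of_eventuallyEq
    (Eventually.of_forall fun p => ?_)
  · rw [fderivTmap_apply]
    simp only [ContinuousLinearMap.prod_apply, add_apply, sub_apply, neg_apply, smul_apply,
      ContinuousLinearMap.comp_apply, ContinuousLinearMap.coe_fst', ContinuousLinearMap.coe_snd',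
      ContinuousLinearMap.toSpanSingleton_apply, smul_eq_mul, Pi.add_apply, Pi.sub_apply,
      Pi.mul_apply, Function.comp_apply, coords_apply, coords_symm_apply, jacobianTmap,
      Matrix.mulVec, dotProduct, Fin.sum_univ_four, Matrix.of_apply, Matrix.cons_val,
      Prod.mk.injEq, p₀]
    refine ⟨?_, ?_, ?_, ?_⟩ <;> ring
  · simp only [TmapExplicit, JacExplicit, Matrix.trace_fin_two_of, Matrix.det_fin_two_of, F1, F2,
      dF1dx1, dF1dx2, Pi.add_apply, Pi.sub_apply, Pi.neg_apply, Pi.mul_apply, Function.comp_apply,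
      inv_pow]
    refine Prod.ext ?_ (Prod.ext ?_ (Prod.ext ?_ ?_)) <;> simp only <;> ring

theorem Tmap_eventuallyEq_TmapExplicit :
    Tmap =ᶠ[𝓝 (1, 1/4, 1/6, 324/7)] TmapExplicit := by
  have hopen : IsOpen {p : ℝ × ℝ × ℝ × ℝ | 11 / 936 * (1 + 1) + 1 * (3 / 2 - p.1 - p.2.1) ≠ 0} :=
    isOpen_ne_fun (by fun_prop) continuous_const
  filter_upwards [hopen.mem_nhds (by norm_num)] with p hp
  simp only [Tmap, TmapExplicit, Jac_eq_JacExplicit _ _ _ _ _ _ _ _ _ _ _ hp]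

/-- **Condition BT.3.** The map `T : (x₁, x₂, δ, k₃) ↦ (F₁, F₂, tr J, det J)` has invertible
derivative at the Bogdanov–Takens point `(1, 1/4, 1/6, 324/7)`; its Jacobian determinant
there equals `−6 k₃² − (27/4) W k₃` with `k₃ = 324/7` and `W = 256 β k₄/(8β+1)³`, which is
negative. -/
theorem lck_BT3 :
    ∃ L : (ℝ × ℝ × ℝ × ℝ) →L[ℝ] (ℝ × ℝ × ℝ × ℝ),
      HasFDerivAt Tmap L (1, 1/4, 1/6, 324/7) ∧
      LinearMap.det (L : (ℝ × ℝ × ℝ × ℝ) →ₗ[ℝ] (ℝ × ℝ × ℝ × ℝ))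
        = -6 * (324/7 : ℝ) ^ 2
          - (27/4) * (256 * (11/936) * (16384/819) / (8 * (11/936) + 1) ^ 3) * (324/7) ∧
      (-6 * (324/7 : ℝ) ^ 2
          - (27/4) * (256 * (11/936) * (16384/819) / (8 * (11/936) + 1) ^ 3) * (324/7) < 0) ∧
      Function.Bijective L := by
  have hdet : LinearMap.det (fderivTmap : (ℝ × ℝ × ℝ × ℝ) →ₗ[ℝ] (ℝ × ℝ × ℝ × ℝ)) ≠ 0 := by
    rw [det_fderivTmap]; norm_num
  refine ⟨fderivTmap,
    hasFDerivAt_TmapExplicit.congr_of_eventuallyEq Tmap_eventuallyEq_TmapExplicit,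
    by rw [det_fderivTmap]; norm_num, by norm_num, (LinearMap.equivOfDetNeZero _ hdet).bijective⟩
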